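/- arXiv:2512.13968 — 2 statements merged into one kernel-verified Lean document; each statement's English description precedes it below -/
import Mathlib

section
/- In a monoidal category C with biproducts, if objects a and b of C satisfy a ⊗ b ≅ (b ⊗ a) ⊕ 𝟙 (where 𝟙 is the monoidal unit), then in the Grothendieck group the classes [a] and [b] satisfy [a][b] = [b][a] + 1; consequently there is a ring homomorphism from the integral Weyl algebra A₁ to K₀(C) sending x ↦ [b] and ∂ ↦ [a]. -/
/-- The defining relation of the integral Weyl algebra `A₁ = ℤ⟨x,∂⟩/(∂x - x∂ - 1)`:
generator `0` is `x`, generator `1` is `∂`, and `∂ * x = x * ∂ + 1`. -/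
inductive WeylRel : FreeAlgebra ℤ (Fin 2) → FreeAlgebra ℤ (Fin 2) → Prop
  | rel : WeylRel (FreeAlgebra.ι ℤ 1 * FreeAlgebra.ι ℤ 0)
      (FreeAlgebra.ι ℤ 0 * FreeAlgebra.ι ℤ 1 + 1)

/-- The integral Weyl algebra on one variable. -/
abbrev Weyl : Type := RingQuot WeylRel

/-- The element `x` of the integral Weyl algebra. -/
noncomputable def Wx : Weyl := RingQuot.mkRingHom WeylRel (FreeAlgebra.ι ℤ 0)

/-- The element `∂` of the integral Weyl algebra. -/
noncomputable def Wd : Weyl := RingQuot.mkRingHom WeylRel (FreeAlgebra.ι ℤ 1)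

open CategoryTheory CategoryTheory.Limits MonoidalCategory

/-- In an additive monoidal category `C` with biproducts, if `a ⊗ b ≅ (b ⊗ a) ⊕ 𝟙`,
then in the (split) Grothendieck ring the classes satisfy `[a][b] = [b][a] + 1`.
We formalize `K₀(C)` via an arbitrary additive, multiplicative, iso-invariant assignment
`k : C → R` into a ring `R` (as the classes in the split Grothendieck ring are):
any such `k` satisfies `k a * k b = k b * k a + 1`, and consequently there is a ring
homomorphism from the integral Weyl algebra `A₁` to `R` with `x ↦ [b]` and `∂ ↦ [a]`. -/
theorem stmt_8 {C : Type*} [Category C] [Preadditive C] [MonoidalCategory C]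
    [HasBinaryBiproducts C] (a b : C)
    (hab : Nonempty ((a ⊗ b) ≅ (b ⊗ a) ⊞ (𝟙_ C)))
    (R : Type*) [Ring R] (k : C → R)
    (hiso : ∀ X Y : C, (X ≅ Y) → k X = k Y)
    (hadd : ∀ X Y : C, k (X ⊞ Y) = k X + k Y)
    (hmul : ∀ X Y : C, k (X ⊗ Y) = k X * k Y)
    (hone : k (𝟙_ C) = 1) :
    k a * k b = k b * k a + 1 ∧
    ∃ φ : Weyl →+* R, φ Wx = k b ∧ φ Wd = k a := by
  obtain ⟨e⟩ := hab
  have key : k a * k b = k b * k a + 1 := by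
    rw [← hmul, ← hmul, ← hone, ← hadd, hiso _ _ e]
  refine ⟨key, ?_⟩
  let F : FreeAlgebra ℤ (Fin 2) →+* R :=
    (FreeAlgebra.lift ℤ (fun i : Fin 2 => if i = 0 then k b else k a)).toRingHom
  have hF : ∀ ⦃x y⦄, WeylRel x y → F x = F y := by
    rintro x y ⟨⟩
    simp [F, key]
  refine ⟨RingQuot.lift ⟨F, hF⟩, ?_, ?_⟩ <;>
    simp [Wx, Wd, RingQuot.lift_mkRingHom_apply, F]
end

section
/- In an essentially small symmetric (or braided) monoidal triangulated category K, every prime thick ⊗-ideal is completely prime. -/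
open CategoryTheory CategoryTheory.Limits CategoryTheory.Pretriangulated MonoidalCategory

universe v u

variable (C : Type u) [Category.{v} C] [HasZeroObject C] [Preadditive C]
  [HasShift C ℤ] [∀ n : ℤ, (CategoryTheory.shiftFunctor C n).Additive]
  [Pretriangulated C] [MonoidalCategory C] [HasBinaryBiproducts C]

/-- A (two-sided) thick ⊗-ideal of a monoidal triangulated category `C`:
a thick triangulated subcategory closed under tensoring on both sides. -/
structure ThickTensorIdeal where
  /-- The underlying set of objects. -/
  P : Set C
  zero_mem : ∀ X : C, IsZero X → X ∈ P
  iso_closed : ∀ {X Y : C}, (X ≅ Y) → X ∈ P → Y ∈ P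
  shift_mem : ∀ (X : C) (n : ℤ), X ∈ P → X⟦n⟧ ∈ P
  ext_mem : ∀ T : Triangle C, T ∈ (distTriang C) → T.obj₁ ∈ P → T.obj₃ ∈ P → T.obj₂ ∈ P
  summand_mem : ∀ X Y : C, (X ⊞ Y) ∈ P → X ∈ P
  tensor_left : ∀ X Y : C, X ∈ P → (Y ⊗ X) ∈ P
  tensor_right : ∀ X Y : C, X ∈ P → (X ⊗ Y) ∈ P

variable {C}

/-- A proper thick ⊗-ideal `P` is prime if `x ⊗ K ⊗ y ⊆ P` implies `x ∈ P` or `y ∈ P`. -/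
def ThickTensorIdeal.IsPrime (P : ThickTensorIdeal C) : Prop :=
  P.P ≠ Set.univ ∧ ∀ x y : C, (∀ z : C, (x ⊗ z ⊗ y) ∈ P.P) → x ∈ P.P ∨ y ∈ P.P

/-- A proper thick ⊗-ideal `P` is completely prime if `x ⊗ y ∈ P` implies
`x ∈ P` or `y ∈ P`. -/
def ThickTensorIdeal.IsCompletelyPrime (P : ThickTensorIdeal C) : Prop :=
  P.P ≠ Set.univ ∧ ∀ x y : C, (x ⊗ y) ∈ P.P → x ∈ P.P ∨ y ∈ P.P

/-- In an essentially small braided (in particular symmetric) monoidal triangulated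
category, every prime thick ⊗-ideal is completely prime. -/
theorem stmt_11 [BraidedCategory C] (P : ThickTensorIdeal C) (h : P.IsPrime) :
    P.IsCompletelyPrime := by
  refine ⟨h.1, fun x y hxy => ?_⟩
  refine h.2 x y fun z => ?_
  exact P.iso_closed ((α_ x y z) ≪≫ whiskerLeftIso x (β_ y z))
    (P.tensor_right _ z hxy)
end
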